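/- arXiv:1901.00050 — 7 statements merged into one kernel-verified Lean document; each statement's English description precedes it below -/
import Mathlib

section
/- For any norm ν on a Euclidean space E and any point x ∈ E, the subspace parallel to the subdifferential ∂ν(x) (i.e., ℝ·(∂ν(x) − ∂ν(x))) equals x^⊥ ∩ span(∂ν(x)). -/
/-- The subdifferential of a function `ν` at `x`. -/
def subdiff {E : Type*} [NormedAddCommGroup E] [InnerProductSpace ℝ E]
    (ν : E → ℝ) (x : E) : Set E :=
  {y | ∀ w : E, (inner ℝ y (w - x) : ℝ) ≤ ν w - ν x}

/-- The subspace parallel to a set: `ℝ (C - C)`. -/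
def parSet {E : Type*} [NormedAddCommGroup E] [InnerProductSpace ℝ E]
    (C : Set E) : Set E :=
  {z | ∃ t : ℝ, ∃ u ∈ C, ∃ v ∈ C, z = t • (u - v)}

/-- The linear span of a set: `ℝ C - ℝ C`. -/
def spanSet {E : Type*} [NormedAddCommGroup E] [InnerProductSpace ℝ E]
    (C : Set E) : Set E :=
  {z | ∃ s t : ℝ, ∃ u ∈ C, ∃ v ∈ C, z = s • u - t • v}

/-!
Every subgradient `y ∈ ∂ν(x)` satisfies `⟪y, x⟫ = ν x` (test the subgradient inequality at
`0` and `2x`), so `∂ν(x)` lies in an affine hyperplane orthogonal to `x`. For `x ≠ 0` that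
hyperplane misses the origin, and `s u - t v` is orthogonal to `x` only if `s = t`. For `x = 0`,
`∂ν(0)` is a convex set closed under negation, so `s u - t v = (|s| + |t|) c` for some
`c ∈ ∂ν(0)`, which is `(|s| + |t|) / 2 • (c - (-c))`.
-/

open RealInnerProductSpace
open scoped Pointwise

lemma smul_mem_abs_smul_set {M : Type*} [AddCommGroup M] [Module ℝ M] {C : Set M}
    (hneg : ∀ y ∈ C, -y ∈ C) (s : ℝ) {u : M} (hu : u ∈ C) : s • u ∈ |s| • C := by
  rcases le_or_gt 0 s with hs | hs
  · exact ⟨u, hu, by rw [abs_of_nonneg hs]⟩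
  · exact ⟨-u, hneg u hu, by simp only [abs_of_neg hs, smul_neg, neg_smul, neg_neg]⟩

section ParSpan

variable {E : Type*} [NormedAddCommGroup E] [InnerProductSpace ℝ E]

lemma parSet_subset_spanSet (C : Set E) : parSet C ⊆ spanSet C := by
  rintro _ ⟨t, u, hu, v, hv, rfl⟩
  exact ⟨t, t, u, hu, v, hv, smul_sub t u v⟩

lemma inner_eq_zero_of_mem_parSet {C : Set E} {x : E} {a : ℝ} (hC : ∀ y ∈ C, ⟪y, x⟫ = a)
    {z : E} (hz : z ∈ parSet C) : ⟪z, x⟫ = 0 := by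
  obtain ⟨t, u, hu, v, hv, rfl⟩ := hz
  rw [real_inner_smul_left, inner_sub_left, hC u hu, hC v hv, sub_self, mul_zero]

lemma mem_parSet_of_mem_spanSet {C : Set E} {x : E} {a : ℝ} (ha : a ≠ 0)
    (hC : ∀ y ∈ C, ⟪y, x⟫ = a) {z : E} (hz : z ∈ spanSet C) (hzx : ⟪z, x⟫ = 0) :
    z ∈ parSet C := by
  obtain ⟨s, t, u, hu, v, hv, rfl⟩ := hz
  rw [inner_sub_left, real_inner_smul_left, real_inner_smul_left, hC u hu, hC v hv,
    ← sub_mul, mul_eq_zero, sub_eq_zero] at hzx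
  obtain rfl : s = t := hzx.resolve_right ha
  exact ⟨s, u, hu, v, hv, (smul_sub s u v).symm⟩

lemma spanSet_subset_parSet_of_convex {C : Set E} (hconv : Convex ℝ C)
    (hneg : ∀ y ∈ C, -y ∈ C) : spanSet C ⊆ parSet C := by
  rintro _ ⟨s, t, u, hu, v, hv, rfl⟩
  have hsum : s • u - t • v ∈ (|s| + |t|) • C := by
    rw [hconv.add_smul (abs_nonneg s) (abs_nonneg t), sub_eq_add_neg, ← neg_smul,
      ← abs_neg t]
    exact Set.add_mem_add (smul_mem_abs_smul_set hneg s hu) (smul_mem_abs_smul_set hneg (-t) hv)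
  obtain ⟨c, hc, hcz⟩ := hsum
  refine ⟨(|s| + |t|) / 2, c, hc, -c, hneg c hc, ?_⟩
  rw [← hcz, sub_neg_eq_add, ← two_smul ℝ c, smul_smul, div_mul_cancel₀ _ two_ne_zero]

end ParSpan

section Subdiff

variable {E : Type*} [NormedAddCommGroup E] [InnerProductSpace ℝ E]

lemma convex_subdiff (ν : E → ℝ) (x : E) : Convex ℝ (subdiff ν x) := by
  intro y₁ hy₁ y₂ hy₂ a b ha hb hab w
  rw [inner_add_left, real_inner_smul_left, real_inner_smul_left]
  calc a * ⟪y₁, w - x⟫ + b * ⟪y₂, w - x⟫ ≤ a * (ν w - ν x) + b * (ν w - ν x) := by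
        gcongr
        exacts [hy₁ w, hy₂ w]
    _ = ν w - ν x := by rw [← add_mul, hab, one_mul]

lemma neg_mem_subdiff_zero {ν : E → ℝ} (heven : ∀ w, ν (-w) = ν w) {y : E}
    (hy : y ∈ subdiff ν 0) : -y ∈ subdiff ν 0 := by
  intro w
  simpa only [sub_zero, inner_neg_left, inner_neg_right, heven] using hy (-w)

lemma inner_eq_of_mem_subdiff {ν : E → ℝ}
    (hpos : ∀ c : ℝ, 0 ≤ c → ∀ w : E, ν (c • w) = c * ν w)
    {x y : E} (hy : y ∈ subdiff ν x) : ⟪y, x⟫ = ν x := by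
  have h0 : ν 0 = 0 := by simpa using hpos 0 le_rfl 0
  have hle := hy 0
  have hge := hy ((2 : ℝ) • x)
  rw [zero_sub, inner_neg_right, h0] at hle
  rw [two_smul, add_sub_cancel_right, ← two_smul ℝ x, hpos 2 zero_le_two] at hge
  linarith

end Subdiff

theorem par_subdiff_eq_general {E : Type*} [NormedAddCommGroup E] [InnerProductSpace ℝ E]
    (ν : E → ℝ)
    (hdef : ∀ x : E, ν x = 0 ↔ x = 0)
    (hhom : ∀ (c : ℝ) (x : E), ν (c • x) = |c| * ν x)
    (x : E) :
    parSet (subdiff ν x) = {z : E | (inner ℝ z x : ℝ) = 0} ∩ spanSet (subdiff ν x) := by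
  have hinner : ∀ y ∈ subdiff ν x, ⟪y, x⟫ = ν x := fun y hy =>
    inner_eq_of_mem_subdiff (fun c hc w => by rw [hhom, abs_of_nonneg hc]) hy
  refine Set.Subset.antisymm
    (fun z hz => ⟨inner_eq_zero_of_mem_parSet hinner hz, parSet_subset_spanSet _ hz⟩) ?_
  rintro z ⟨hzx, hz⟩
  rcases eq_or_ne x 0 with rfl | hx
  · have heven : ∀ w : E, ν (-w) = ν w := fun w => by simpa using hhom (-1) w
    exact spanSet_subset_parSet_of_convex (convex_subdiff ν 0)
      (fun y hy => neg_mem_subdiff_zero heven hy) hz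
  · exact mem_parSet_of_mem_spanSet (mt (hdef x).mp hx) hinner hz hzx

theorem par_subdiff_eq {E : Type*} [NormedAddCommGroup E] [InnerProductSpace ℝ E]
    [FiniteDimensional ℝ E] (ν : E → ℝ)
    (hdef : ∀ x : E, ν x = 0 ↔ x = 0)
    (hhom : ∀ (c : ℝ) (x : E), ν (c • x) = |c| * ν x)
    (htri : ∀ x y : E, ν (x + y) ≤ ν x + ν y)
    (x : E) :
    parSet (subdiff ν x) = {z : E | (inner ℝ z x : ℝ) = 0} ∩ spanSet (subdiff ν x) :=
  par_subdiff_eq_general ν hdef hhom x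
end

section
/- For any n×n complex matrix X and any unit complex number w, the identity wⁿ · det((1/2)(w̄ X + w X*) − I) = det((1/2)(X + w² X*) − w I) holds; consequently, the map w ↦ det((1/2)(X + w² X*) − w I) is (the restriction to the unit circle of) a polynomial in w of degree at most 2n, and so if (1/2)(w̄X + wX*) − I is singular for 2n+1 distinct unit complex numbers w, then it is singular for all unit complex numbers w. -/
open Matrix Polynomial

/-!
Since `w̄ = w⁻¹` on the unit circle, multiplying `Φ(w̄ X) - I` by `w` gives the quadratic pencil
`½ X - w I + w² ½ X*`, whose determinant is a polynomial of degree at most `2n`. Singularity at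
`2n + 1` points of the circle makes this polynomial vanish at `2n + 1` points, hence identically.
-/

/-- The Hermitian part `Φ(A) = (A + A*)/2`. -/
noncomputable def hermPart {n : ℕ} (A : Matrix (Fin n) (Fin n) ℂ) :
    Matrix (Fin n) (Fin n) ℂ :=
  (1 / 2 : ℂ) • (A + Aᴴ)

namespace Polynomial

variable {ι R : Type*} [Fintype ι] [DecidableEq ι] [CommRing R]

theorem natDegree_det_le (M : Matrix ι ι R[X]) {d : ℕ} (hM : ∀ i j, (M i j).natDegree ≤ d) :
    M.det.natDegree ≤ Fintype.card ι * d := by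
  rw [det_apply]
  refine natDegree_sum_le_of_forall_le _ _ fun σ _ => (natDegree_smul_le _ _).trans ?_
  refine (natDegree_prod_le _ _).trans ?_
  simpa using Finset.sum_le_card_nsmul Finset.univ _ d fun i _ => hM (σ i) i

noncomputable def quadraticPencil (A B D : Matrix ι ι R) : Matrix ι ι R[X] :=
  A.map C + (X : R[X]) • B.map C + (X ^ 2 : R[X]) • D.map C

theorem eval_det_quadraticPencil (A B D : Matrix ι ι R) (r : R) :
    (quadraticPencil A B D).det.eval r = (A + r • B + r ^ 2 • D).det := by
  rw [← coe_evalRingHom, RingHom.map_det]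
  congr 1
  ext i j
  simp only [quadraticPencil, RingHom.mapMatrix_apply, coe_evalRingHom, map_apply, Matrix.add_apply,
    Matrix.smul_apply, smul_eq_mul, X_mul_C, X_pow_mul_C, eval_add, eval_C, eval_mul, eval_X, eval_pow]
  ring

theorem natDegree_det_quadraticPencil_le (A B D : Matrix ι ι R) :
    (quadraticPencil A B D).det.natDegree ≤ 2 * Fintype.card ι := by
  refine (natDegree_det_le _ fun i j => ?_).trans_eq (mul_comm _ _)
  simp only [quadraticPencil, Matrix.add_apply, Matrix.smul_apply, map_apply, smul_eq_mul]
  compute_degree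

end Polynomial

section

variable {n : ℕ} (X : Matrix (Fin n) (Fin n) ℂ)

theorem smul_hermPart_conj_smul_sub_one {w : ℂ} (hw : w * starRingEnd ℂ w = 1) :
    w • (hermPart (starRingEnd ℂ w • X) - 1)
      = (1 / 2 : ℂ) • (X + w ^ 2 • Xᴴ) - w • (1 : Matrix (Fin n) (Fin n) ℂ) := by
  have hw' : w • (starRingEnd ℂ w • X) = X := by rw [smul_smul, hw, one_smul]
  simp only [hermPart, conjTranspose_smul, Complex.star_def, Complex.conj_conj, smul_sub,
    smul_add, smul_comm w (1 / 2 : ℂ), hw', smul_smul w w, ← sq]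

theorem pow_mul_det_hermPart_conj_smul_sub_one {w : ℂ} (hw : ‖w‖ = 1) :
    w ^ n * (hermPart (starRingEnd ℂ w • X) - 1).det
      = ((1 / 2 : ℂ) • (X + w ^ 2 • Xᴴ) - w • (1 : Matrix (Fin n) (Fin n) ℂ)).det := by
  have hw_conj : w * starRingEnd ℂ w = 1 := by simp [Complex.mul_conj', hw]
  rw [← smul_hermPart_conj_smul_sub_one X hw_conj, det_smul, Fintype.card_fin]

theorem eval_det_quadraticPencil_hermPart (w : ℂ) :
    (quadraticPencil ((1 / 2 : ℂ) • X) (-1) ((1 / 2 : ℂ) • Xᴴ)).det.eval w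
      = ((1 / 2 : ℂ) • (X + w ^ 2 • Xᴴ) - w • (1 : Matrix (Fin n) (Fin n) ℂ)).det := by
  rw [eval_det_quadraticPencil]
  congr 1
  module

end

theorem det_identity_and_polynomial {n : ℕ} (X : Matrix (Fin n) (Fin n) ℂ) :
    (∀ w : ℂ, ‖w‖ = 1 →
      w ^ n * (hermPart ((starRingEnd ℂ w) • X) - 1).det
        = ((1 / 2 : ℂ) • (X + w ^ 2 • Xᴴ) - w • (1 : Matrix (Fin n) (Fin n) ℂ)).det) ∧
    (∃ p : Polynomial ℂ, p.degree ≤ (2 * n : ℕ) ∧ ∀ w : ℂ,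
      p.eval w
        = ((1 / 2 : ℂ) • (X + w ^ 2 • Xᴴ) - w • (1 : Matrix (Fin n) (Fin n) ℂ)).det) ∧
    (∀ S : Finset ℂ, (∀ w ∈ S, ‖w‖ = 1) → 2 * n + 1 ≤ S.card →
      (∀ w ∈ S, (hermPart ((starRingEnd ℂ w) • X) - 1).det = 0) →
      ∀ w : ℂ, ‖w‖ = 1 → (hermPart ((starRingEnd ℂ w) • X) - 1).det = 0) := by
  set p := (quadraticPencil ((1 / 2 : ℂ) • X) (-1) ((1 / 2 : ℂ) • Xᴴ)).det
  have hp_deg : p.natDegree ≤ 2 * n :=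
    (natDegree_det_quadraticPencil_le _ _ _).trans_eq (by rw [Fintype.card_fin])
  have hp_eval : ∀ w : ℂ, p.eval w
      = ((1 / 2 : ℂ) • (X + w ^ 2 • Xᴴ) - w • (1 : Matrix (Fin n) (Fin n) ℂ)).det :=
    eval_det_quadraticPencil_hermPart X
  refine ⟨fun w hw => pow_mul_det_hermPart_conj_smul_sub_one X hw,
    ⟨p, degree_le_of_natDegree_le hp_deg, hp_eval⟩, fun S hS hcard hzero w hw => ?_⟩
  have hp_zero : p = 0 := by
    refine eq_zero_of_natDegree_lt_card_of_eval_eq_zero' p S (fun v hv => ?_) (by omega)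
    rw [hp_eval, ← pow_mul_det_hermPart_conj_smul_sub_one X (hS v hv), hzero v hv, mul_zero]
  have hw0 : w ≠ 0 := by
    rintro rfl
    simp at hw
  have h := pow_mul_det_hermPart_conj_smul_sub_one X hw
  rw [← hp_eval, hp_zero, eval_zero] at h
  simpa [hw0] using h.symm
end

section
/- Let f(w) = (w, w², ..., wⁿ) ∈ ℂⁿ. For any set of at most 2n+1 distinct unit complex numbers w₁,...,w_m, the vectors f(w₁),...,f(w_m) are affinely independent over ℝ in ℂⁿ viewed as a real vector space; equivalently, if real numbers y₁,...,y_m satisfy Σⱼ yⱼ = 0 and Σⱼ yⱼ f(wⱼ) = 0 then all yⱼ = 0. -/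
/-!
The hypotheses say that the power sums `∑ yⱼ wⱼ^k` vanish for `0 ≤ k ≤ n`. On the unit circle
`conj w = w⁻¹`, so for real weights they vanish for `-n ≤ k ≤ n` as well. Shifting by `n`, the
weights `yⱼ wⱼ^(-n)` annihilate the powers `0, …, 2n`, i.e. lie in the kernel of a transposed
Vandermonde matrix with at most `2n + 1` distinct nodes, which is trivial.
-/

/-- The vector `f(w) = (w, w², ..., wⁿ) ∈ ℂⁿ`. -/
def fvec (n : ℕ) (w : ℂ) : Fin n → ℂ := fun k => w ^ ((k : ℕ) + 1)

open ComplexConjugate Finset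

theorem Matrix.eq_zero_of_forall_zpow_sum_mul_zpow_eq_zero {K : Type*} [Field K] {m n : ℕ}
    (hm : m ≤ 2 * n + 1) {w : Fin m → K} (hinj : Function.Injective w) (hw : ∀ j, w j ≠ 0)
    {c : Fin m → K} (hc : ∀ k : ℤ, |k| ≤ n → ∑ j, c j * w j ^ k = 0) :
    c = 0 := by
  have hshift : (fun j => c j * w j ^ (-n : ℤ)) = 0 := by
    refine Matrix.eq_zero_of_forall_pow_sum_mul_pow_eq_zero hinj fun i => ?_
    rw [← hc (i - n) (abs_sub_le_iff.mpr ⟨by omega, by omega⟩)]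
    refine sum_congr rfl fun j _ => ?_
    rw [mul_assoc, ← zpow_natCast, ← zpow_add₀ (hw j), neg_add_eq_sub]
  funext j
  simpa [hw j] using congrFun hshift j

lemma sum_mul_pow_eq_zero_of_sum_smul_fvec_eq_zero {ι : Type*} [Fintype ι] {n : ℕ}
    {w : ι → ℂ} {y : ι → ℝ} (hsum : ∑ j, y j = 0) (hcomb : ∑ j, y j • fvec n (w j) = 0)
    {k : ℕ} (hk : k ≤ n) :
    ∑ j, (y j : ℂ) * w j ^ k = 0 := by
  rcases k with _ | k
  · simpa using congrArg ((↑) : ℝ → ℂ) hsum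
  · simpa [fvec] using congrFun hcomb ⟨k, hk⟩

lemma sum_mul_zpow_eq_zero_of_norm_eq_one {ι : Type*} [Fintype ι] {n : ℕ}
    {w : ι → ℂ} (hw : ∀ j, ‖w j‖ = 1) {y : ι → ℝ}
    (hy : ∀ k ≤ n, ∑ j, (y j : ℂ) * w j ^ k = 0) {k : ℤ} (hk : |k| ≤ n) :
    ∑ j, (y j : ℂ) * w j ^ k = 0 := by
  obtain ⟨k, rfl | rfl⟩ := Int.eq_nat_or_neg k
  · simpa using hy k (by simpa using hk)
  · have hconj : conj (∑ j, (y j : ℂ) * w j ^ k) = 0 := by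
      rw [hy k (by simpa using hk), map_zero]
    simpa [zpow_neg, Complex.inv_eq_conj (by simp [hw] : ‖w _ ^ k‖ = 1)] using hconj

theorem fvec_affinely_independent {n m : ℕ} (hm : m ≤ 2 * n + 1)
    (w : Fin m → ℂ) (hw : ∀ j, ‖w j‖ = 1) (hinj : Function.Injective w)
    (y : Fin m → ℝ) (hsum : ∑ j, y j = 0)
    (hcomb : ∑ j, y j • fvec n (w j) = 0) :
    y = 0 := by
  have hw0 : ∀ j, w j ≠ 0 := fun j => norm_ne_zero_iff.mp (by simp [hw j])
  have hc : (fun j => (y j : ℂ)) = 0 :=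
    Matrix.eq_zero_of_forall_zpow_sum_mul_zpow_eq_zero hm hinj hw0 fun _ hk =>
      sum_mul_zpow_eq_zero_of_norm_eq_one hw
        (fun _ => sum_mul_pow_eq_zero_of_sum_smul_fvec_eq_zero hsum hcomb) hk
  funext j
  simpa using congrFun hc j
end

section
/- In ℂ^{n+1} viewed as a real vector space, the convex hull of the set {(1, w, w², ..., wⁿ) : |w| = 1} has affine dimension exactly 2n. -/
open Finset Complex

private lemma geom_sum_root {N : ℕ} {x : ℂ} (hx : x ^ N = 1) :
    ∑ j ∈ Finset.range N, x ^ j = if x = 1 then (N : ℂ) else 0 := by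
  split_ifs with h
  · simp [h]
  · rw [geom_sum_eq h, hx, sub_self, zero_div]

private lemma sum_smul_mem_vectorSpan {n N : ℕ} (a : ℕ → ℝ) (w : ℕ → ℂ)
    (hw : ∀ j, ‖w j‖ = 1) (ha : ∑ j ∈ range N, a j = 0) :
    (∑ j ∈ range N, a j • fun m : Fin (n+1) => (w j) ^ (m : ℕ)) ∈
      vectorSpan ℝ {v : Fin (n + 1) → ℂ | ∃ w : ℂ, ‖w‖ = 1 ∧ v = fun k : Fin (n + 1) => w ^ (k : ℕ)} := by
  set S : Set (Fin (n+1) → ℂ) :=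
    {v : Fin (n + 1) → ℂ | ∃ w : ℂ, ‖w‖ = 1 ∧ v = fun k : Fin (n + 1) => w ^ (k : ℕ)} with hS
  have h1 : (fun m : Fin (n+1) => (1:ℂ) ^ (m:ℕ)) ∈ S := ⟨1, by simp⟩
  have key : (∑ j ∈ range N, a j • fun m : Fin (n+1) => (w j) ^ (m:ℕ))
      = ∑ j ∈ range N, a j • ((fun m : Fin (n+1) => (w j) ^ (m:ℕ)) - fun m : Fin (n+1) => (1:ℂ)^(m:ℕ)) := by
    rw [Finset.sum_congr rfl (fun j _ => smul_sub (a j) _ _), Finset.sum_sub_distrib,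
      ← Finset.sum_smul, ha, zero_smul, sub_zero]
  rw [key]
  refine Submodule.sum_mem _ fun j _ => Submodule.smul_mem _ _ ?_
  have := vsub_mem_vectorSpan ℝ (show (fun m : Fin (n+1) => (w j) ^ (m:ℕ)) ∈ S from ⟨w j, hw j, rfl⟩) h1
  simpa [vsub_eq_sub] using this

private lemma key_sum (n : ℕ) (k m : Fin (n+1)) (hk : k ≠ 0) (c₁ c₂ : ℂ) :
    ∑ j ∈ range (2*n+1), (c₁ * (Complex.exp (2*Real.pi*I/(2*n+1)))^(j*(k:ℕ))
        + c₂ * ((Complex.exp (2*Real.pi*I/(2*n+1)))⁻¹)^(j*(k:ℕ)))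
        * (Complex.exp (2*Real.pi*I/(2*n+1)))^(j*(m:ℕ))
      = if m = k then c₂ * ((2*n+1 : ℕ) : ℂ) else 0 := by
  set ζ : ℂ := Complex.exp (2*Real.pi*I/(2*n+1)) with hζdef
  have hN : (2*n+1 : ℕ) ≠ 0 := by omega
  have hζ : IsPrimitiveRoot ζ (2*n+1) := by
    have := Complex.isPrimitiveRoot_exp (2*n+1) hN
    convert this using 2
    push_cast; ring
  have hζ1 : ζ ^ (2*n+1) = 1 := hζ.pow_eq_one
  have hζ0 : ζ ≠ 0 := Complex.exp_ne_zero _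
  have hk1 : 1 ≤ (k:ℕ) := Nat.pos_of_ne_zero (fun h => hk (Fin.ext (by simp [h])))
  have hkn : (k:ℕ) ≤ n := Fin.is_le k
  have hmn : (m:ℕ) ≤ n := Fin.is_le m
  set x : ℂ := ζ ^ ((k:ℕ) + (m:ℕ)) with hxdef
  set y : ℂ := ζ ^ (m:ℕ) / ζ ^ (k:ℕ) with hydef
  have hterm : ∀ j, (c₁ * ζ^(j*(k:ℕ)) + c₂ * ζ⁻¹^(j*(k:ℕ))) * ζ^(j*(m:ℕ))
      = c₁ * x^j + c₂ * y^j := by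
    intro j
    rw [hxdef, hydef]
    field_simp
    ring
  have hxN : x ^ (2*n+1) = 1 := by
    rw [hxdef, ← pow_mul, mul_comm, pow_mul, hζ1, one_pow]
  have hyN : y ^ (2*n+1) = 1 := by
    rw [hydef, div_pow, ← pow_mul, ← pow_mul, mul_comm (m:ℕ), mul_comm (k:ℕ), pow_mul, pow_mul,
      hζ1, one_pow, one_pow, div_one]
  have hxne : x ≠ 1 := by
    intro h
    have := (hζ.pow_eq_one_iff_dvd _).mp h
    have := Nat.le_of_dvd (by omega) this
    omega
  have hyiff : y = 1 ↔ m = k := by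
    rw [hydef, div_eq_one_iff_eq (pow_ne_zero _ hζ0)]
    constructor
    · intro h
      exact Fin.ext (hζ.pow_inj (by omega) (by omega) h)
    · intro h; rw [h]
  calc ∑ j ∈ range (2*n+1), (c₁ * ζ^(j*(k:ℕ)) + c₂ * ζ⁻¹^(j*(k:ℕ))) * ζ^(j*(m:ℕ))
      = ∑ j ∈ range (2*n+1), (c₁ * x^j + c₂ * y^j) := Finset.sum_congr rfl (fun j _ => hterm j)
    _ = c₁ * ∑ j ∈ range (2*n+1), x^j + c₂ * ∑ j ∈ range (2*n+1), y^j := by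
        rw [Finset.sum_add_distrib, Finset.mul_sum, Finset.mul_sum]
    _ = if m = k then c₂ * ((2*n+1 : ℕ) : ℂ) else 0 := by
        rw [geom_sum_root hxN, geom_sum_root hyN, if_neg hxne, mul_zero, zero_add]
        by_cases h : m = k
        · rw [if_pos (hyiff.mpr h), if_pos h]
        · rw [if_neg (fun hy => h (hyiff.mp hy)), if_neg h, mul_zero]

private lemma norm_zeta (n : ℕ) : ‖Complex.exp (2*Real.pi*I/(2*n+1))‖ = 1 := by
  have : (2*Real.pi*I/(2*(n:ℂ)+1)) = ((2*Real.pi/(2*n+1) : ℝ) : ℂ) * I := by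
    push_cast; ring
  rw [this]
  exact Complex.norm_exp_ofReal_mul_I _

private lemma single_mem (n : ℕ) (k : Fin (n+1)) (hk : k ≠ 0) (c : ℂ) (hc : c = 1 ∨ c = I) :
    Pi.single k c ∈
      vectorSpan ℝ {v : Fin (n + 1) → ℂ | ∃ w : ℂ, ‖w‖ = 1 ∧ v = fun k : Fin (n + 1) => w ^ (k : ℕ)} := by
  set ζ : ℂ := Complex.exp (2*Real.pi*I/(2*n+1)) with hζdef
  have hN : (2*n+1 : ℕ) ≠ 0 := by omega
  have hζ : IsPrimitiveRoot ζ (2*n+1) := by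
    have := Complex.isPrimitiveRoot_exp (2*n+1) hN
    convert this using 2
    push_cast; ring
  have hnorm : ‖ζ‖ = 1 := norm_zeta n
  have hconj : (starRingEnd ℂ) ζ = ζ⁻¹ := (Complex.inv_eq_conj hnorm).symm
  have hk1 : 1 ≤ (k:ℕ) := Nat.pos_of_ne_zero (fun h => hk (Fin.ext (by simp [h])))
  have hkn : (k:ℕ) ≤ n := Fin.is_le k
  obtain ⟨c₁, c₂, ha⟩ : ∃ c₁ c₂ : ℂ, ∀ j : ℕ, ∃ r : ℝ,
      (r : ℂ) = c₁ * ζ^(j*(k:ℕ)) + c₂ * ζ⁻¹^(j*(k:ℕ))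
        ∧ c₂ * ((2*n+1:ℕ):ℂ) = ((2*n+1:ℕ):ℂ)/2 * c := by
    rcases hc with rfl | rfl
    · refine ⟨1/2, 1/2, fun j => ⟨(ζ^(j*(k:ℕ))).re, ?_, by ring⟩⟩
      have h := Complex.add_conj (ζ^(j*(k:ℕ)))
      rw [map_pow, hconj] at h
      push_cast at h ⊢
      linear_combination -h/2
    · refine ⟨-(I/2), I/2, fun j => ⟨(ζ^(j*(k:ℕ))).im, ?_, by ring⟩⟩
      have h := Complex.sub_conj (ζ^(j*(k:ℕ)))
      rw [map_pow, hconj] at h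
      push_cast at h ⊢
      linear_combination (I/2) * h + ((ζ^(j*(k:ℕ))).im : ℂ) * Complex.I_sq
  choose a haa using ha
  have hac : ∀ j, ((a j : ℝ) : ℂ) = c₁ * ζ^(j*(k:ℕ)) + c₂ * ζ⁻¹^(j*(k:ℕ)) := fun j => (haa j).1
  have hc2 : c₂ * ((2*n+1:ℕ):ℂ) = ((2*n+1:ℕ):ℂ)/2 * c := (haa 0).2
  have hdvd : ¬ ζ^(k:ℕ) = 1 := by
    intro h
    have := Nat.le_of_dvd (by omega) ((hζ.pow_eq_one_iff_dvd _).mp h)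
    omega
  have hpk : (ζ^(k:ℕ))^(2*n+1) = 1 := by
    rw [← pow_mul, mul_comm, pow_mul, hζ.pow_eq_one, one_pow]
  have hsz : ∑ j ∈ range (2*n+1), (ζ^(k:ℕ))^j = 0 := by
    rw [geom_sum_root hpk, if_neg hdvd]
  have hsz' : ∑ j ∈ range (2*n+1), ((ζ^(k:ℕ))⁻¹)^j = 0 := by
    rw [geom_sum_root (by rw [inv_pow, hpk, inv_one]), if_neg (by rw [inv_eq_one]; exact hdvd)]
  have hwz : ∑ j ∈ range (2*n+1), a j = 0 := by
    have h0 : ((∑ j ∈ range (2*n+1), a j : ℝ) : ℂ) = 0 := by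
      push_cast
      rw [Finset.sum_congr rfl (fun j _ => hac j), Finset.sum_add_distrib, ← Finset.mul_sum,
        ← Finset.mul_sum,
        show (∑ j ∈ range (2*n+1), ζ^(j*(k:ℕ))) = ∑ j ∈ range (2*n+1), (ζ^(k:ℕ))^j from
          Finset.sum_congr rfl (fun j _ => by rw [← pow_mul, mul_comm]),
        show (∑ j ∈ range (2*n+1), ζ⁻¹^(j*(k:ℕ))) = ∑ j ∈ range (2*n+1), ((ζ^(k:ℕ))⁻¹)^j from
          Finset.sum_congr rfl (fun j _ => by
            rw [inv_pow, inv_pow, ← pow_mul, mul_comm (k:ℕ) j]),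
        hsz, hsz', mul_zero, mul_zero, add_zero]
    exact_mod_cast h0
  have hmem := sum_smul_mem_vectorSpan (n := n) (N := 2*n+1) a (fun j => ζ^j)
    (fun j => by rw [norm_pow, hnorm, one_pow]) hwz
  have hsum : (∑ j ∈ range (2*n+1), a j • fun m : Fin (n+1) => (ζ^j) ^ (m : ℕ))
      = ((2*n+1:ℝ)/2) • (Pi.single k c : Fin (n+1) → ℂ) := by
    funext m
    have hks := key_sum n k m hk c₁ c₂
    simp only [Finset.sum_apply, Pi.smul_apply, Complex.real_smul]
    rw [show (∑ j ∈ range (2*n+1), ((a j : ℝ):ℂ) * (ζ^j) ^ (m:ℕ))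
        = ∑ j ∈ range (2*n+1), (c₁ * ζ^(j*(k:ℕ)) + c₂ * ζ⁻¹^(j*(k:ℕ))) * ζ^(j*(m:ℕ)) from
      Finset.sum_congr rfl (fun j _ => by rw [hac j, ← pow_mul]), hks, Pi.single_apply]
    split_ifs with h
    · rw [hc2]; push_cast; ring
    · simp
  rw [hsum] at hmem
  have hfin := Submodule.smul_mem _ (2/(2*n+1) : ℝ) hmem
  rw [smul_smul] at hfin
  have : (2/(2*n+1) : ℝ) * ((2*n+1:ℝ)/2) = 1 := by
    rw [div_mul_div_comm]
    rw [div_eq_one_iff_eq (by positivity)]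
    ring
  rw [this, one_smul] at hfin
  exact hfin

theorem dim_convexHull_moment_curve (n : ℕ) :
    Module.finrank ℝ
      (vectorSpan ℝ (convexHull ℝ
        {v : Fin (n + 1) → ℂ | ∃ w : ℂ, ‖w‖ = 1 ∧ v = fun k : Fin (n + 1) => w ^ (k : ℕ)}))
      = 2 * n := by
  set S : Set (Fin (n+1) → ℂ) :=
    {v : Fin (n + 1) → ℂ | ∃ w : ℂ, ‖w‖ = 1 ∧ v = fun k : Fin (n + 1) => w ^ (k : ℕ)} with hS
  have h1 : vectorSpan ℝ (convexHull ℝ S) = vectorSpan ℝ S := by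
    rw [← direction_affineSpan, affineSpan_convexHull, direction_affineSpan]
  rw [h1]
  set f : (Fin (n+1) → ℂ) →ₗ[ℝ] ℂ := LinearMap.proj 0 with hf
  have hker : vectorSpan ℝ S = LinearMap.ker f := by
    apply le_antisymm
    · rw [vectorSpan_def]
      rw [Submodule.span_le]
      rintro v hv
      rw [Set.mem_vsub] at hv
      obtain ⟨x, ⟨w, hw, rfl⟩, y, ⟨u, hu, rfl⟩, rfl⟩ := hv
      simp [LinearMap.mem_ker, hf, vsub_eq_sub]
    · intro v hv
      rw [LinearMap.mem_ker] at hv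
      have hv0 : v 0 = 0 := hv
      rw [← Finset.univ_sum_single v]
      refine Submodule.sum_mem _ fun k _ => ?_
      by_cases hk : k = 0
      · subst hk
        rw [hv0, Pi.single_zero]
        exact Submodule.zero_mem _
      · have : Pi.single k (v k) = (v k).re • (Pi.single k (1:ℂ) : Fin (n+1) → ℂ)
            + (v k).im • (Pi.single k I : Fin (n+1) → ℂ) := by
          rw [← Pi.single_smul, ← Pi.single_smul, ← Pi.single_add]
          have harg : (v k).re • (1:ℂ) + (v k).im • I = v k := by
            rw [Complex.real_smul, Complex.real_smul, mul_one]
            exact Complex.re_add_im (v k)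
          rw [harg]
        rw [this]
        exact Submodule.add_mem _
          (Submodule.smul_mem _ _ (single_mem n k hk 1 (Or.inl rfl)))
          (Submodule.smul_mem _ _ (single_mem n k hk I (Or.inr rfl)))
  rw [hker]
  have hsurj : Function.Surjective f := fun c => ⟨fun _ => c, rfl⟩
  have hrank := LinearMap.finrank_range_add_finrank_ker f
  rw [LinearMap.range_eq_top.mpr hsurj, finrank_top, Complex.finrank_real_complex] at hrank
  have hdom : Module.finrank ℝ (Fin (n+1) → ℂ) = 2*(n+1) := by
    rw [Module.finrank_pi_fintype, Finset.sum_congr rfl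
      (fun i _ => Complex.finrank_real_complex)]
    simp [mul_comm]
  rw [hdom] at hrank
  omega
end

section
/- For any strictly positive real sequence b₁, b₂, b₃, ..., there exist a strictly decreasing sequence +∞ = t₁ > t₂ > t₃ > ... > 0 and continuous strictly increasing functions h_j : [0, t_j) → ℝ₊ with h_j(0) = 0, h_j(t_{j+1}) = 1, h_j(t) → +∞ as t ↑ t_j, where h₁(t) = b₁ t and h_{j+1}(t) = b_{j+1} t / (1 − h_j(t)) for t ∈ [0, t_{j+1}). -/
open Filter
open scoped ENNReal

def RDom (d : ℝ≥0∞) : Set ℝ := {x : ℝ | 0 ≤ x ∧ ENNReal.ofReal x < d}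

structure RInv (d : ℝ≥0∞) (f : ℝ → ℝ) : Prop where
  dpos : 0 < d
  cont : ContinuousOn f (RDom d)
  mono : StrictMonoOn f (RDom d)
  zero : f 0 = 0
  blow : Tendsto f (if d = ⊤ then atTop else nhdsWithin d.toReal (Set.Iio d.toReal)) atTop

lemma RInv.blow_lt {d : ℝ≥0∞} {f : ℝ → ℝ} (hf : RInv d f) (hd : d ≠ ⊤) :
    Tendsto f (nhdsWithin d.toReal (Set.Iio d.toReal)) atTop := by
  have := hf.blow; rwa [if_neg hd] at this

lemma RInv.nonneg {d : ℝ≥0∞} {f : ℝ → ℝ} (hf : RInv d f) {x : ℝ} (hx : 0 ≤ x)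
    (hxd : ENNReal.ofReal x < d) : 0 ≤ f x := by
  rcases hx.lt_or_eq with h | h
  · have h0 : (0:ℝ) ∈ RDom d := ⟨le_refl 0, by simpa using hf.dpos⟩
    have := hf.mono h0 ⟨hx, hxd⟩ h
    rw [hf.zero] at this; exact this.le
  · rw [← h, hf.zero]

lemma exists_root {d : ℝ≥0∞} {f : ℝ → ℝ} (hf : RInv d f) :
    ∃ r : ℝ, 0 < r ∧ ENNReal.ofReal r < d ∧ f r = 1 := by
  obtain ⟨x0, hx0pos, hx0d, hx0f⟩ : ∃ x0 : ℝ, 0 < x0 ∧ ENNReal.ofReal x0 < d ∧ 1 < f x0 := by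
    by_cases hd : d = ⊤
    · have hb := hf.blow; rw [if_pos hd] at hb
      obtain ⟨x0, h1, h0⟩ := ((hb.eventually_gt_atTop 1).and (eventually_gt_atTop 0)).exists
      exact ⟨x0, h0, by simp [hd], h1⟩
    · have hb := hf.blow; rw [if_neg hd] at hb
      have htr : 0 < d.toReal := ENNReal.toReal_pos hf.dpos.ne' hd
      have h1 : ∀ᶠ x in nhdsWithin d.toReal (Set.Iio d.toReal), 1 < f x := hb.eventually_gt_atTop 1
      have h2 : ∀ᶠ x in nhdsWithin d.toReal (Set.Iio d.toReal), 0 < x := by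
        filter_upwards [mem_nhdsWithin_of_mem_nhds (Ioi_mem_nhds htr)] with x hx
        exact hx
      have h3 : ∀ᶠ x in nhdsWithin d.toReal (Set.Iio d.toReal), x < d.toReal := by
        filter_upwards [self_mem_nhdsWithin] with x hx
        exact hx
      obtain ⟨x0, hx1, hx0, hxd⟩ := (h1.and (h2.and h3)).exists
      refine ⟨x0, hx0, ?_, hx1⟩
      rw [ENNReal.ofReal_lt_iff_lt_toReal hx0.le hd]
      exact hxd
  have hsub : Set.Icc 0 x0 ⊆ RDom d := fun x hx =>
    ⟨hx.1, lt_of_le_of_lt (ENNReal.ofReal_le_ofReal hx.2) hx0d⟩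
  have hivt := intermediate_value_Icc hx0pos.le (hf.cont.mono hsub)
  have h1mem : (1:ℝ) ∈ Set.Icc (f 0) (f x0) := ⟨by rw [hf.zero]; exact zero_le_one, hx0f.le⟩
  obtain ⟨r, hrmem, hfr⟩ := hivt h1mem
  have hrpos : 0 < r := by
    rcases hrmem.1.lt_or_eq with h | h
    · exact h
    · exfalso; rw [← h, hf.zero] at hfr; norm_num at hfr
  exact ⟨r, hrpos, lt_of_le_of_lt (ENNReal.ofReal_le_ofReal hrmem.2) hx0d, hfr⟩

lemma step_inv {d : ℝ≥0∞} {f : ℝ → ℝ} {r b' : ℝ} (hf : RInv d f) (hr0 : 0 < r)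
    (hrd : ENNReal.ofReal r < d) (hfr : f r = 1) (hb' : 0 < b') :
    RInv (ENNReal.ofReal r) (fun x => b' * x / (1 - f x)) := by
  have hdomeq : RDom (ENNReal.ofReal r) = Set.Ico 0 r := by
    ext x
    simp [RDom, ENNReal.ofReal_lt_ofReal_iff hr0, Set.mem_Ico]
  have hmemd : ∀ x ∈ Set.Icc (0:ℝ) r, x ∈ RDom d := fun x hx =>
    ⟨hx.1, lt_of_le_of_lt (ENNReal.ofReal_le_ofReal hx.2) hrd⟩
  have hlt1 : ∀ x ∈ Set.Ico (0:ℝ) r, f x < 1 := fun x hx =>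
    hfr ▸ hf.mono (hmemd x ⟨hx.1, hx.2.le⟩) (hmemd r ⟨hr0.le, le_refl r⟩) hx.2
  have hden : ∀ x ∈ Set.Ico (0:ℝ) r, 0 < 1 - f x := fun x hx => by linarith [hlt1 x hx]
  constructor
  · exact ENNReal.ofReal_pos.2 hr0
  · rw [hdomeq]
    exact ((continuous_const.mul continuous_id).continuousOn).div
      (continuousOn_const.sub (hf.cont.mono (fun x hx => hmemd x ⟨hx.1, hx.2.le⟩)))
      (fun x hx => (hden x hx).ne')
  · rw [hdomeq]
    intro x hx y hy hxy
    simp only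
    rw [div_lt_div_iff₀ (hden x hx) (hden y hy)]
    rcases hx.1.lt_or_eq with h0x | h0x
    · have hfxy : f x < f y := hf.mono (hmemd x ⟨hx.1, hx.2.le⟩) (hmemd y ⟨hy.1, hy.2.le⟩) hxy
      have h1 : b' * x * (1 - f y) < b' * y * (1 - f y) :=
        mul_lt_mul_of_pos_right (mul_lt_mul_of_pos_left hxy hb') (hden y hy)
      have h2 : b' * y * (1 - f y) < b' * y * (1 - f x) :=
        mul_lt_mul_of_pos_left (by linarith) (mul_pos hb' (h0x.trans hxy))
      linarith
    · have hy0 : 0 < y := by rw [← h0x] at hxy; exact hxy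
      rw [← h0x, hf.zero]
      nlinarith
  · simp [hf.zero]
  · rw [if_neg ENNReal.ofReal_ne_top, ENNReal.toReal_ofReal hr0.le]
    have hL : nhdsWithin r (Set.Iio r) ≤ nhdsWithin r (RDom d) := by
      rw [nhdsWithin_le_iff]
      exact Filter.mem_of_superset (Ioo_mem_nhdsLT_of_mem ⟨hr0, le_refl r⟩)
        (fun x hx => hmemd x ⟨hx.1.le, hx.2.le⟩)
    have hnum : Tendsto (fun x => b' * x) (nhdsWithin r (Set.Iio r)) (nhds (b' * r)) :=
      ((continuous_const.mul continuous_id).tendsto r).mono_left nhdsWithin_le_nhds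
    have hf1 : Tendsto f (nhdsWithin r (Set.Iio r)) (nhds 1) := by
      have hc := (hf.cont r (hmemd r ⟨hr0.le, le_refl r⟩)).tendsto
      rw [hfr] at hc
      exact hc.mono_left hL
    have hden' : Tendsto (fun x => 1 - f x) (nhdsWithin r (Set.Iio r)) (nhdsWithin 0 (Set.Ioi 0)) := by
      rw [tendsto_nhdsWithin_iff]
      constructor
      · have hzz : Tendsto (fun x => 1 - f x) (nhdsWithin r (Set.Iio r)) (nhds (1 - 1)) :=
          tendsto_const_nhds.sub hf1
        simpa using hzz
      · filter_upwards [Ioo_mem_nhdsLT_of_mem ⟨hr0, le_refl r⟩] with x hx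
        exact hden x ⟨hx.1.le, hx.2⟩
    have hinv : Tendsto (fun x => (1 - f x)⁻¹) (nhdsWithin r (Set.Iio r)) atTop :=
      hden'.inv_tendsto_nhdsGT_zero
    simpa [div_eq_mul_inv] using Filter.Tendsto.pos_mul_atTop (mul_pos hb' hr0) hnum hinv

lemma base_inv {b0 : ℝ} (hb0 : 0 < b0) : RInv ⊤ (fun x => b0 * x) where
  dpos := by simp
  cont := (continuous_const.mul continuous_id).continuousOn
  mono := fun x _ y _ hxy => mul_lt_mul_of_pos_left hxy hb0
  zero := mul_zero b0
  blow := by rw [if_pos rfl]; exact Tendsto.const_mul_atTop hb0 tendsto_id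

noncomputable def nextr {d : ℝ≥0∞} {f : ℝ → ℝ} (hf : RInv d f) : ℝ := (exists_root hf).choose

lemma nextr_pos {d : ℝ≥0∞} {f : ℝ → ℝ} (hf : RInv d f) : 0 < nextr hf :=
  (exists_root hf).choose_spec.1

lemma nextr_lt {d : ℝ≥0∞} {f : ℝ → ℝ} (hf : RInv d f) : ENNReal.ofReal (nextr hf) < d :=
  (exists_root hf).choose_spec.2.1

lemma nextr_root {d : ℝ≥0∞} {f : ℝ → ℝ} (hf : RInv d f) : f (nextr hf) = 1 :=
  (exists_root hf).choose_spec.2.2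

noncomputable def pack (b : ℕ → ℝ) (hb : ∀ j, 0 < b j) :
    ℕ → Σ' (d : ℝ≥0∞) (f : ℝ → ℝ), RInv d f
  | 0 => ⟨⊤, fun x => b 0 * x, base_inv (hb 0)⟩
  | (j + 1) =>
      ⟨ENNReal.ofReal (nextr (pack b hb j).2.2),
       fun x => b (j + 1) * x / (1 - (pack b hb j).2.1 x),
       step_inv (pack b hb j).2.2 (nextr_pos _) (nextr_lt _) (nextr_root _) (hb (j + 1))⟩

/-- Lemma on recursively defined functions: for any strictly positive sequence
`b₁, b₂, …` there are thresholds `+∞ = t₁ > t₂ > ⋯ > 0` (here `t j` denotes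
`t_{j+1}`, with `t 0 = ⊤`) and continuous strictly increasing functions
`h_j : [0, t_j) → ℝ₊` with `h_j(0) = 0`, `h_j(t_{j+1}) = 1`, `h_j(t) → ∞` as
`t ↑ t_j`, `h₁(t) = b₁ t`, and `h_{j+1}(t) = b_{j+1} t / (1 - h_j(t))`. -/
theorem recursive_sequence_construction (b : ℕ → ℝ) (hb : ∀ j, 0 < b j) :
    ∃ (t : ℕ → ℝ≥0∞) (h : ℕ → ℝ → ℝ),
      t 0 = ⊤ ∧
      (∀ j, t (j + 1) ≠ ⊤) ∧
      StrictAnti t ∧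
      (∀ j, 0 < t j) ∧
      (∀ j, ContinuousOn (h j) {x : ℝ | 0 ≤ x ∧ ENNReal.ofReal x < t j}) ∧
      (∀ j, StrictMonoOn (h j) {x : ℝ | 0 ≤ x ∧ ENNReal.ofReal x < t j}) ∧
      (∀ j, ∀ x : ℝ, 0 ≤ x → ENNReal.ofReal x < t j → 0 ≤ h j x) ∧
      (∀ j, h j 0 = 0) ∧
      (∀ j, h j ((t (j + 1)).toReal) = 1) ∧
      Tendsto (h 0) atTop atTop ∧
      (∀ j, Tendsto (h (j + 1))
        (nhdsWithin ((t (j + 1)).toReal) (Set.Iio ((t (j + 1)).toReal))) atTop) ∧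
      (∀ x : ℝ, 0 ≤ x → h 0 x = b 0 * x) ∧
      (∀ j, ∀ x : ℝ, 0 ≤ x → ENNReal.ofReal x < t (j + 1) →
        h (j + 1) x = b (j + 1) * x / (1 - h j x)) := by
  refine ⟨fun j => (pack b hb j).1, fun j => (pack b hb j).2.1,
    ?_, ?_, ?_, ?_, ?_, ?_, ?_, ?_, ?_, ?_, ?_, ?_, ?_⟩
  · rfl
  · intro j; simp only [pack]; exact ENNReal.ofReal_ne_top
  · refine strictAnti_nat_of_succ_lt (fun j => ?_)
    simp only [pack]
    exact nextr_lt _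
  · exact fun j => (pack b hb j).2.2.dpos
  · exact fun j => (pack b hb j).2.2.cont
  · exact fun j => (pack b hb j).2.2.mono
  · exact fun j x hx hxd => (pack b hb j).2.2.nonneg hx hxd
  · exact fun j => (pack b hb j).2.2.zero
  · intro j
    simp only [pack]
    rw [ENNReal.toReal_ofReal (nextr_pos _).le]
    exact nextr_root _
  · have hB := (pack b hb 0).2.2.blow
    rw [if_pos (show (pack b hb 0).1 = ⊤ from rfl)] at hB
    exact hB
  · intro j
    exact (pack b hb (j + 1)).2.2.blow_lt (by simp only [pack]; exact ENNReal.ofReal_ne_top)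
  · intro x _
    rfl
  · intro j x _ _
    rfl
end

section
/- Let X be a 3×3 complex matrix unitarily similar to the matrix with rows (0, 2a, 2b), (0, 2c, 2d), (0, 0, 0), for complex numbers a, b, c, d. Then for any unit complex number w, the characteristic polynomial of Φ(w̄ X) = (1/2)(w̄ X + w X*) in the variable λ equals −λ³ + 2λ² Re(w̄ c) + (|a|² + |d|² + |b|²) λ + 2 Re(w̄ (a d b̄ − c |b|²)). -/
/-!
`Φ` commutes with unitary similarity, so the determinant is that of `Φ(w̄E) - λ`, a Hermitian
matrix with vanishing corners whose off-diagonal entries are `w̄a, w̄b, w̄d`. Expanding it, the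
phase `w̄` disappears from their moduli since `|w| = 1`, and survives exactly once in the cyclic
product `(w̄a)(w̄d)(w̄b)‾ = w̄ a d b̄`.
-/

open Matrix

open ComplexConjugate

theorem hermPart_mul_mul_conjTranspose {n : ℕ} (U A : Matrix (Fin n) (Fin n) ℂ) :
    hermPart (U * A * Uᴴ) = U * hermPart A * Uᴴ := by
  simp only [hermPart, conjTranspose_mul, conjTranspose_conjTranspose, Matrix.mul_smul,
    Matrix.smul_mul, Matrix.mul_add, Matrix.add_mul, Matrix.mul_assoc]

theorem hermPart_smul_diskMatrix (w a b c d : ℂ) :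
    hermPart (conj w • !![0, 2 * a, 2 * b; 0, 2 * c, 2 * d; 0, 0, 0]) =
      !![0, conj w * a, conj w * b;
        conj (conj w * a), ((2 * (conj w * c).re : ℝ) : ℂ), conj w * d;
        conj (conj w * b), conj (conj w * d), 0] := by
  ext i j
  fin_cases i <;> fin_cases j <;> simp [hermPart, Complex.re_eq_add_conj, -Complex.mul_re] <;> ring

theorem det_hermitian_fin_three_sub_smul_one (p q s : ℂ) (r : ℝ) (lam : ℂ) :
    (!![0, p, q; conj p, (r : ℂ), s; conj q, conj s, 0] -
        lam • (1 : Matrix (Fin 3) (Fin 3) ℂ)).det =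
      -lam ^ 3 + r * lam ^ 2 + ((‖p‖ ^ 2 + ‖q‖ ^ 2 + ‖s‖ ^ 2 : ℝ) : ℂ) * lam
        + 2 * ((p * s * conj q).re : ℂ) - r * ((‖q‖ ^ 2 : ℝ) : ℂ) := by
  simp only [det_fin_three, Complex.re_eq_add_conj]
  simp [Complex.ofReal_pow, ← Complex.mul_conj']
  ring

theorem charpoly_of_disk_form (a b c d : ℂ) (X : Matrix (Fin 3) (Fin 3) ℂ)
    (hX : ∃ U ∈ Matrix.unitaryGroup (Fin 3) ℂ,
      X = U * !![0, 2 * a, 2 * b; 0, 2 * c, 2 * d; 0, 0, 0] * Uᴴ)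
    (w : ℂ) (hw : ‖w‖ = 1) (lam : ℂ) :
    (hermPart ((starRingEnd ℂ w) • X) - lam • (1 : Matrix (Fin 3) (Fin 3) ℂ)).det
      = -lam ^ 3 + 2 * lam ^ 2 * (((starRingEnd ℂ w * c).re : ℝ) : ℂ)
        + ((‖a‖ ^ 2 + ‖d‖ ^ 2 + ‖b‖ ^ 2 : ℝ) : ℂ) * lam
        + 2 * (((starRingEnd ℂ w *
            (a * d * starRingEnd ℂ b - c * ((‖b‖ : ℂ)) ^ 2)).re : ℝ) : ℂ) := by
  obtain ⟨U, hU, rfl⟩ := hX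
  have hUU : U * Uᴴ = 1 := mem_unitaryGroup_iff.mp hU
  have hconj : ∀ M : Matrix (Fin 3) (Fin 3) ℂ, U * M * Uᴴ - lam • 1 = U * (M - lam • 1) * Uᴴ :=
    fun M ↦ by rw [Matrix.mul_sub, Matrix.sub_mul, Matrix.mul_smul, Matrix.smul_mul,
      Matrix.mul_one, hUU]
  have hwconj : conj w * w = 1 := by
    rw [mul_comm, Complex.mul_conj, Complex.normSq_eq_norm_sq, hw]; norm_num
  rw [← Matrix.smul_mul, ← Matrix.mul_smul, hermPart_mul_mul_conjTranspose, hconj,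
    det_conj_of_mul_eq_one hUU (mem_unitaryGroup_iff'.mp hU),
    hermPart_smul_diskMatrix, det_hermitian_fin_three_sub_smul_one]
  have hphase : conj w * a * (conj w * d) * conj (conj w * b) = conj w * (a * d * conj b) := by
    simp only [map_mul, Complex.conj_conj]
    linear_combination conj w * a * d * conj b * hwconj
  rw [hphase]
  simp only [norm_mul, Complex.norm_conj, hw, one_mul, ← Complex.ofReal_pow,
    mul_sub, ← mul_assoc, Complex.sub_re, Complex.re_mul_ofReal]
  push_cast
  ring
end

section
/- Let E be the 3×3 matrix with rows (0, 2a, 2b), (0, 2c, 2d), (0, 0, 0) where a, b, c, d ∈ ℂ satisfy c(|a|² + |d|²) = −a d b̄, and assume that if a = 0 = d then 2|c| ≤ |b|. Then for every unit complex number w, the largest eigenvalue of (1/2)(w̄ E + w E*) equals √(|a|² + |d|² + |b|²); hence the field of values of E is the closed disk of radius √(|a|² + |d|² + |b|²) centered at the origin. -/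
/-!
For a unit `w`, put `H_w = (w̄ E + w E*)/2`. Expanding `det (x - H_w)` and using the relation
`c (|a|² + |d|²) = -a d b̄` gives `(x - 2 Re (w̄ c)) (x² - R²)` with `R² = |a|² + |d|² + |b|²`,
and `2 |c| ≤ |b|`, so the spectrum of `H_w` is `{2 Re (w̄ c), R, -R}` with top `R`.

For the field of values, `Re (w̄ u* E u) = u* H_w u ≤ R` bounds `W(E)` by the disk. Conversely,
unit eigenvectors `v`, `v'` of `H_w` for `R` and `-R` satisfy `v* (w̄ E) v = R` and
`v'* (w̄ E) v' = -R`; on their span `w̄ E` is `[[R, p], [-p̄, -R]]`, and a suitable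
`u = α v + β v'` with `|α|² + |β|² = 1` realises every real value in `[-R, R]`. Rotating by `w`
fills the disk.
-/

open Matrix

/-- The field of values (numerical range) `W(X) = {u* X u : ‖u‖ = 1}`. -/
def fov {n : ℕ} (X : Matrix (Fin n) (Fin n) ℂ) : Set ℂ :=
  {z | ∃ u : Fin n → ℂ, star u ⬝ᵥ u = 1 ∧ z = star u ⬝ᵥ X.mulVec u}

open ComplexConjugate
open scoped ComplexOrder MatrixOrder Pointwise

section HermPart

variable {n : ℕ} (A : Matrix (Fin n) (Fin n) ℂ)

lemma hermPart_isHermitian : (hermPart A).IsHermitian := by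
  simp only [IsHermitian, hermPart, conjTranspose_smul, conjTranspose_add,
    conjTranspose_conjTranspose, add_comm A]
  norm_num

lemma hermPart_neg : hermPart (-A) = -hermPart A := by
  simp only [hermPart, conjTranspose_neg, ← neg_add, smul_neg]

lemma dotProduct_hermPart_mulVec (x y : Fin n → ℂ) :
    star x ⬝ᵥ hermPart A *ᵥ y = (star x ⬝ᵥ A *ᵥ y + conj (star y ⬝ᵥ A *ᵥ x)) / 2 := by
  have hadj : star x ⬝ᵥ Aᴴ *ᵥ y = conj (star y ⬝ᵥ A *ᵥ x) := by
    rw [dotProduct_mulVec, ← star_mulVec, star_dotProduct]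
    rfl
  simp only [hermPart, smul_mulVec, add_mulVec, dotProduct_smul, dotProduct_add, hadj,
    smul_eq_mul]
  ring

lemma dotProduct_hermPart_mulVec_self (x : Fin n → ℂ) :
    star x ⬝ᵥ hermPart A *ᵥ x = (star x ⬝ᵥ A *ᵥ x).re := by
  rw [dotProduct_hermPart_mulVec, Complex.add_conj]
  push_cast
  ring

end HermPart

namespace Matrix.IsHermitian

variable {𝕜 ι : Type*} [RCLike 𝕜] [Fintype ι] {H : Matrix ι ι 𝕜} (hH : H.IsHermitian)
include hH

lemma dotProduct_eq_zero_of_eigenvalue_ne {v v' : ι → 𝕜} {μ ν : ℝ}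
    (hv : H *ᵥ v = (μ : 𝕜) • v) (hv' : H *ᵥ v' = (ν : 𝕜) • v') (hne : μ ≠ ν) :
    star v ⬝ᵥ v' = 0 := by
  have h : (μ : 𝕜) * (star v ⬝ᵥ v') = ν * (star v ⬝ᵥ v') := by
    calc (μ : 𝕜) * (star v ⬝ᵥ v') = star (H *ᵥ v) ⬝ᵥ v' := by
          simp [hv, star_smul, smul_dotProduct, RCLike.real_smul_eq_coe_mul]
      _ = star v ⬝ᵥ H *ᵥ v' := by
          rw [star_mulVec, ← dotProduct_mulVec, hH.eq]
      _ = ν * (star v ⬝ᵥ v') := by simp [hv', dotProduct_smul, RCLike.real_smul_eq_coe_mul]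
  exact (mul_eq_mul_right_iff.mp h).resolve_left (by exact_mod_cast hne)

variable [DecidableEq ι]

lemma re_dotProduct_mulVec_le {r : ℝ} (hle : ∀ i, hH.eigenvalues i ≤ r) (u : ι → 𝕜) :
    RCLike.re (star u ⬝ᵥ H *ᵥ u) ≤ r * RCLike.re (star u ⬝ᵥ u) := by
  have hH_le : H ≤ algebraMap ℝ (Matrix ι ι 𝕜) r :=
    le_algebraMap_of_spectrum_le (by
      rw [hH.spectrum_real_eq_range_eigenvalues]
      rintro _ ⟨i, rfl⟩
      exact hle i) hH.isSelfAdjoint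
  have hre := (RCLike.nonneg_iff.mp ((Matrix.le_iff.mp hH_le).dotProduct_mulVec_nonneg u)).1
  rw [sub_mulVec, dotProduct_sub, map_sub, Algebra.algebraMap_eq_smul_one, smul_mulVec,
    one_mulVec, dotProduct_smul, RCLike.smul_re] at hre
  linarith

lemma exists_unit_eigenvector (i : ι) :
    ∃ v : ι → 𝕜, star v ⬝ᵥ v = 1 ∧ H *ᵥ v = (hH.eigenvalues i : 𝕜) • v := by
  refine ⟨hH.eigenvectorBasis i, ?_, ?_⟩
  · rw [dotProduct_comm, ← EuclideanSpace.inner_eq_star_dotProduct, inner_self_eq_norm_sq_to_K,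
      hH.eigenvectorBasis.orthonormal.1 i]
    simp
  · rw [hH.mulVec_eigenvectorBasis, RCLike.real_smul_eq_coe_smul (K := 𝕜)]

lemma mem_range_eigenvalues_iff (x : ℝ) :
    x ∈ Set.range hH.eigenvalues ↔ (scalar ι (x : 𝕜) - H).det = 0 := by
  rw [← hH.spectrum_real_eq_range_eigenvalues, ← spectrum.algebraMap_mem_iff 𝕜,
    Matrix.mem_spectrum_iff_isRoot_charpoly, Polynomial.IsRoot, eval_charpoly]

end Matrix.IsHermitian

lemma Complex.exists_norm_eq_one_conj_mul_eq_norm (z : ℂ) :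
    ∃ w : ℂ, ‖w‖ = 1 ∧ conj w * z = ‖z‖ := by
  set e := Complex.exp (z.arg * Complex.I)
  have he : conj e * e = 1 := by rw [Complex.conj_mul', Complex.norm_exp_ofReal_mul_I]; simp
  refine ⟨e, Complex.norm_exp_ofReal_mul_I z.arg, ?_⟩
  linear_combination -conj e * Complex.norm_mul_exp_arg_mul_I z + ‖z‖ * he

section FieldOfValues

variable {n : ℕ} {R : ℝ}

lemma fov_subset_closedBall_of_eigenvalues_le {F : Matrix (Fin n) (Fin n) ℂ}
    (hle : ∀ w : ℂ, ‖w‖ = 1 → ∀ i, (hermPart_isHermitian (conj w • F)).eigenvalues i ≤ R) :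
    fov F ⊆ Metric.closedBall 0 R := by
  rintro _ ⟨u, hu, rfl⟩
  obtain ⟨w, hw, hwz⟩ := Complex.exists_norm_eq_one_conj_mul_eq_norm (star u ⬝ᵥ F *ᵥ u)
  have hbound := (hermPart_isHermitian _).re_dotProduct_mulVec_le (hle w hw) u
  rw [dotProduct_hermPart_mulVec_self, smul_mulVec, dotProduct_smul, smul_eq_mul, hwz,
    hu] at hbound
  simpa using hbound

lemma fov_smul (k : ℂ) (X : Matrix (Fin n) (Fin n) ℂ) : fov (k • X) = k • fov X := by
  ext z
  simp only [fov, Set.mem_smul_set, Set.mem_ofPred_eq, smul_mulVec, dotProduct_smul, smul_eq_mul]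
  constructor
  · rintro ⟨u, hu, rfl⟩
    exact ⟨_, ⟨u, hu, rfl⟩, rfl⟩
  · rintro ⟨_, ⟨u, hu, rfl⟩, rfl⟩
    exact ⟨u, hu, rfl⟩

lemma exists_unit_eigenvector_hermPart_of_iSup_eigenvalues [NeZero n]
    {G : Matrix (Fin n) (Fin n) ℂ} (hG : fov G ⊆ Metric.closedBall 0 R)
    (hsup : ⨆ i, (hermPart_isHermitian G).eigenvalues i = R) :
    ∃ v, star v ⬝ᵥ v = 1 ∧ hermPart G *ᵥ v = (R : ℂ) • v ∧ star v ⬝ᵥ G *ᵥ v = R := by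
  obtain ⟨i, hi⟩ := exists_eq_ciSup_of_finite (f := (hermPart_isHermitian G).eigenvalues)
  obtain ⟨v, hv, hHv⟩ := (hermPart_isHermitian G).exists_unit_eigenvector i
  rw [hi, hsup, RCLike.ofReal_eq_complex_ofReal] at hHv
  refine ⟨v, hv, hHv, ?_⟩
  have hre : (star v ⬝ᵥ G *ᵥ v).re = R := by
    have h := dotProduct_hermPart_mulVec_self G v
    rw [hHv, dotProduct_smul, hv, smul_eq_mul, mul_one] at h
    exact_mod_cast h.symm
  have hnorm : ‖star v ⬝ᵥ G *ᵥ v‖ ≤ R := mem_closedBall_zero_iff.mp (hG ⟨v, hv, rfl⟩)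
  have hnonneg : 0 ≤ star v ⬝ᵥ G *ᵥ v :=
    Complex.re_eq_norm.mp (le_antisymm (Complex.re_le_norm _) (hre ▸ hnorm))
  rw [Complex.eq_coe_norm_of_nonneg hnonneg, ← Complex.re_eq_norm.mpr hnonneg, hre]

lemma ofReal_mem_fov_of_orthonormal {G : Matrix (Fin n) (Fin n) ℂ} {v v' : Fin n → ℂ}
    (hv : star v ⬝ᵥ v = 1) (hv' : star v' ⬝ᵥ v' = 1) (hvv' : star v ⬝ᵥ v' = 0)
    (hGv : star v ⬝ᵥ G *ᵥ v = R) (hGv' : star v' ⬝ᵥ G *ᵥ v' = -R)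
    (hHv' : hermPart G *ᵥ v' = -(R : ℂ) • v') (hR : 0 < R) {s : ℝ} (hs : |s| ≤ R) :
    (s : ℂ) ∈ fov G := by
  set p := star v ⬝ᵥ G *ᵥ v'
  have hq : star v' ⬝ᵥ G *ᵥ v = -conj p := by
    have h := dotProduct_hermPart_mulVec G v v'
    rw [hHv', dotProduct_smul, hvv', smul_zero] at h
    have h' := congrArg conj h
    simp only [map_zero, map_div₀, map_add, Complex.conj_conj, map_ofNat] at h'
    linear_combination -2 * h'
  have hv'v : star v' ⬝ᵥ v = 0 := by rw [star_dotProduct, hvv', star_zero]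
  obtain ⟨ζ, hζ, hζp⟩ := Complex.exists_norm_eq_one_conj_mul_eq_norm p
  have hζp' : ζ * conj p = ‖p‖ := by
    simpa using congrArg conj hζp
  have hζζ : conj ζ * ζ = 1 := by
    rw [Complex.conj_mul', hζ]; simp
  have hsR : |s / R| ≤ 1 := by rwa [abs_div, abs_of_pos hR, div_le_one hR]
  set α := √((1 + s / R) / 2)
  set m := √((1 - s / R) / 2)
  have hα : α ^ 2 = (1 + s / R) / 2 := Real.sq_sqrt (by linarith [neg_abs_le (s / R)])
  have hm : m ^ 2 = (1 - s / R) / 2 := Real.sq_sqrt (by linarith [le_abs_self (s / R)])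
  have hαm : (α : ℂ) ^ 2 + (m : ℂ) ^ 2 = 1 := by
    exact_mod_cast (by rw [hα, hm]; ring : α ^ 2 + m ^ 2 = 1)
  have hαmR : ((α : ℂ) ^ 2 - (m : ℂ) ^ 2) * R = s := by
    exact_mod_cast (by rw [hα, hm]; field_simp; ring : (α ^ 2 - m ^ 2) * R = s)
  -- The phase `conj ζ` makes the cross term `α m conj ζ p` real; by `hq` the other cross term
  -- is its negative.
  refine ⟨(α : ℂ) • v + ((m : ℂ) * conj ζ) • v', ?_, ?_⟩
  · simp only [star_add, star_smul, dotProduct_add, add_dotProduct,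
      dotProduct_smul, smul_dotProduct, smul_eq_mul, hv, hv', hvv', Complex.star_def, map_mul,
      Complex.conj_ofReal, Complex.conj_conj, hv'v]
    linear_combination hαm + (m : ℂ) ^ 2 * hζζ
  · simp only [star_add, star_smul, mulVec_add, mulVec_smul, dotProduct_add, add_dotProduct,
      dotProduct_smul, smul_dotProduct, smul_eq_mul, hGv, hGv', hq, Complex.star_def, map_mul,
      Complex.conj_ofReal, Complex.conj_conj]
    linear_combination -hαmR + (α : ℂ) * m * (hζp' - hζp) + (m : ℂ) ^ 2 * R * hζζ

theorem fov_eq_closedBall_of_iSup_eigenvalues [NeZero n] {F : Matrix (Fin n) (Fin n) ℂ}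
    (h : ∀ w : ℂ, ‖w‖ = 1 → ∀ hH : (hermPart (conj w • F)).IsHermitian,
      ⨆ i, hH.eigenvalues i = R) :
    fov F = Metric.closedBall 0 R := by
  have hsub : fov F ⊆ Metric.closedBall 0 R :=
    fov_subset_closedBall_of_eigenvalues_le fun w hw i =>
      h w hw _ ▸ le_ciSup (Set.finite_range _).bddAbove i
  have htop : ∀ w : ℂ, ‖w‖ = 1 → ∃ v, star v ⬝ᵥ v = 1 ∧
      hermPart (conj w • F) *ᵥ v = (R : ℂ) • v ∧ star v ⬝ᵥ (conj w • F) *ᵥ v = R := by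
    intro w hw
    refine exists_unit_eigenvector_hermPart_of_iSup_eigenvalues ?_ (h w hw _)
    rw [fov_smul]
    rintro _ ⟨z, hz, rfl⟩
    simpa [norm_smul, hw] using hsub hz
  refine hsub.antisymm fun z hz => ?_
  obtain ⟨w, hw, hwz⟩ := Complex.exists_norm_eq_one_conj_mul_eq_norm z
  obtain ⟨v, hv, hHv, hGv⟩ := htop w hw
  obtain ⟨v', hv', hHv', hGv'⟩ := htop (-w) (norm_neg w ▸ hw)
  rw [map_neg, neg_smul, hermPart_neg, neg_mulVec, neg_eq_iff_eq_neg, ← neg_smul] at hHv'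
  rw [map_neg, neg_smul, neg_mulVec, dotProduct_neg, neg_eq_iff_eq_neg] at hGv'
  have hzR : ‖z‖ ≤ R := mem_closedBall_zero_iff.mp hz
  obtain ⟨u, hu, hGu⟩ : (‖z‖ : ℂ) ∈ fov (conj w • F) := by
    rcases (norm_nonneg z).trans hzR |>.eq_or_lt with hR | hR
    · refine ⟨v, hv, ?_⟩
      rw [hGv, Complex.ofReal_inj]
      linarith [norm_nonneg z]
    · have hvv' := (hermPart_isHermitian _).dotProduct_eq_zero_of_eigenvalue_ne hHv
        (ν := -R) (by rw [hHv']; push_cast; rfl) (by linarith)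
      exact ofReal_mem_fov_of_orthonormal hv hv' hvv' hGv hGv' hHv' hR
        (by rwa [abs_norm])
  have hw0 : conj w ≠ 0 := by rw [map_ne_zero, ← norm_ne_zero_iff, hw]; exact one_ne_zero
  refine ⟨u, hu, mul_left_cancel₀ hw0 ?_⟩
  rw [hwz, hGu, smul_mulVec, dotProduct_smul, smul_eq_mul]

end FieldOfValues

section ThreeByThree

variable {a b c d : ℂ}

lemma two_mul_norm_le_norm_of_mul_eq
    (habcd : c * (((‖a‖) ^ 2 + (‖d‖) ^ 2 : ℝ) : ℂ) = -(a * d * starRingEnd ℂ b))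
    (hzero : a = 0 ∧ d = 0 → 2 * ‖c‖ ≤ ‖b‖) :
    2 * ‖c‖ ≤ ‖b‖ := by
  by_cases had : a = 0 ∧ d = 0
  · exact hzero had
  have hS : 0 < ‖a‖ ^ 2 + ‖d‖ ^ 2 := by
    rcases not_and_or.mp had with h | h <;> have := norm_pos_iff.mpr h <;> positivity
  have hnorm : ‖c‖ * (‖a‖ ^ 2 + ‖d‖ ^ 2) = ‖a‖ * ‖d‖ * ‖b‖ := by
    have h := congrArg norm habcd
    rw [norm_mul, Complex.norm_real, Real.norm_of_nonneg hS.le] at h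
    simpa using h
  refine le_of_mul_le_mul_right ?_ hS
  nlinarith [mul_nonneg (norm_nonneg b) (sq_nonneg (‖a‖ - ‖d‖))]

lemma det_scalar_sub_hermPart_smul
    (habcd : c * (((‖a‖) ^ 2 + (‖d‖) ^ 2 : ℝ) : ℂ) = -(a * d * starRingEnd ℂ b))
    {w : ℂ} (hw : conj w * w = 1) (x : ℂ) :
    (scalar (Fin 3) x - hermPart (conj w • !![0, 2 * a, 2 * b; 0, 2 * c, 2 * d; 0, 0, 0])).det =
      (x - (conj w * c + w * conj c)) * (x ^ 2 - ((‖a‖ ^ 2 + ‖d‖ ^ 2 + ‖b‖ ^ 2 : ℝ) : ℂ)) := by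
  have habcd' := congrArg conj habcd
  simp only [map_mul, map_neg, Complex.conj_ofReal, Complex.conj_conj] at habcd'
  push_cast [← Complex.mul_conj'] at habcd habcd' ⊢
  rw [det_fin_three]
  simp only [scalar_apply, hermPart, one_div, smul_of, smul_cons, smul_eq_mul, mul_zero,
    smul_empty, smul_add, Fin.isValue, Matrix.sub_apply, diagonal_apply_eq, Matrix.add_apply,
    of_apply, cons_val', cons_val_zero, cons_val_fin_one, Matrix.smul_apply, conjTranspose_apply,
    star_zero, add_zero, sub_zero, cons_val_one, star_mul', RCLike.star_def, Complex.conj_conj,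
    star_ofNat, cons_val, ne_eq, Fin.reduceEq, not_false_eq_true, diagonal_apply_ne, zero_sub,
    mul_neg, zero_add, neg_mul, neg_neg]
  linear_combination
    -(x * (a * conj a + d * conj d) + b * conj b * (x - (conj w * c + w * conj c))
      - (a * conj a + d * conj d) * (conj w * c + w * conj c)) * hw
    - conj w * w * conj w * habcd - conj w * w * w * habcd'

lemma iSup_eigenvalues_hermPart_smul
    (habcd : c * (((‖a‖) ^ 2 + (‖d‖) ^ 2 : ℝ) : ℂ) = -(a * d * starRingEnd ℂ b))
    (hzero : a = 0 ∧ d = 0 → 2 * ‖c‖ ≤ ‖b‖) {w : ℂ} (hw : ‖w‖ = 1)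
    (hH : (hermPart (conj w • !![0, 2 * a, 2 * b; 0, 2 * c, 2 * d; 0, 0, 0])).IsHermitian) :
    ⨆ i, hH.eigenvalues i = √(‖a‖ ^ 2 + ‖d‖ ^ 2 + ‖b‖ ^ 2) := by
  set R := √(‖a‖ ^ 2 + ‖d‖ ^ 2 + ‖b‖ ^ 2)
  set T := 2 * (conj w * c).re
  have hR : R ^ 2 = ‖a‖ ^ 2 + ‖d‖ ^ 2 + ‖b‖ ^ 2 := Real.sq_sqrt (by positivity)
  have hT : conj w * c + w * conj c = T := by
    have h := Complex.add_conj (conj w * c)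
    rw [map_mul, Complex.conj_conj] at h
    exact h
  have hTR : T ≤ R :=
    calc T ≤ 2 * ‖c‖ := by
          have hre := Complex.re_le_norm (conj w * c)
          rw [norm_mul, Complex.norm_conj, hw, one_mul] at hre
          linarith
      _ ≤ ‖b‖ := two_mul_norm_le_norm_of_mul_eq habcd hzero
      _ ≤ R := Real.le_sqrt_of_sq_le (by nlinarith [sq_nonneg ‖a‖, sq_nonneg ‖d‖])
  have hspec : ∀ x : ℝ, x ∈ Set.range hH.eigenvalues ↔ (x - T) * (x ^ 2 - R ^ 2) = 0 := by
    intro x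
    have hw' : conj w * w = 1 := by rw [Complex.conj_mul', hw]; norm_num
    rw [hH.mem_range_eigenvalues_iff, RCLike.ofReal_eq_complex_ofReal,
      det_scalar_sub_hermPart_smul habcd hw', hT, hR]
    norm_cast
  refine le_antisymm (ciSup_le fun i => ?_) ?_
  · rcases mul_eq_zero.mp ((hspec _).mp ⟨i, rfl⟩) with h | h
    · linarith
    · nlinarith [Real.sqrt_nonneg (‖a‖ ^ 2 + ‖d‖ ^ 2 + ‖b‖ ^ 2)]
  · obtain ⟨i, hi⟩ := (hspec R).mpr (by ring)
    exact le_ciSup_of_le (Set.finite_range _).bddAbove i hi.ge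

end ThreeByThree

theorem disk_matrix_three_by_three (a b c d : ℂ)
    (habcd : c * (((‖a‖) ^ 2 + (‖d‖) ^ 2 : ℝ) : ℂ)
      = -(a * d * starRingEnd ℂ b))
    (hzero : a = 0 ∧ d = 0 → 2 * ‖c‖ ≤ ‖b‖) :
    (∀ w : ℂ, ‖w‖ = 1 →
      ∀ hH : (hermPart ((starRingEnd ℂ w) •
          !![0, 2 * a, 2 * b; 0, 2 * c, 2 * d; 0, 0, 0])).IsHermitian,
        (⨆ i, hH.eigenvalues i)
          = Real.sqrt ((‖a‖) ^ 2 + (‖d‖) ^ 2 + (‖b‖) ^ 2)) ∧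
    fov !![0, 2 * a, 2 * b; 0, 2 * c, 2 * d; 0, 0, 0]
      = Metric.closedBall (0 : ℂ)
          (Real.sqrt ((‖a‖) ^ 2 + (‖d‖) ^ 2 + (‖b‖) ^ 2)) := by
  have hsup := fun w hw hH => iSup_eigenvalues_hermPart_smul habcd hzero (w := w) hw hH
  exact ⟨hsup, fov_eq_closedBall_of_iSup_eigenvalues hsup⟩
end
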